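/- Let b ∈ ℝ^m, λ > 0 and μ > 0, and let (X^k)_{k≥0} be a DCA sequence for these data. Then ‖X^{k+1} − X^k‖_F → 0 as k → ∞. -/

import Mathlib

open Matrix BigOperators
open scoped ComplexOrder

noncomputable section

/-- The measurement map 𝒜(X) = (aᵢ* X aᵢ)ᵢ (real part; real for Hermitian X). -/
def calA {d m : ℕ} (a : Fin m → Fin d → ℂ) (X : Matrix (Fin d) (Fin d) ℂ) : Fin m → ℝ :=
  fun i => (star (a i) ⬝ᵥ X.mulVec (a i)).re

/-- ℓ2 norm of a real vector. -/
def l2 {m : ℕ} (v : Fin m → ℝ) : ℝ := Real.sqrt (∑ i, (v i) ^ 2)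

/-- Entrywise ℓ1 norm of a complex matrix. -/
def matL1 {d : ℕ} (X : Matrix (Fin d) (Fin d) ℂ) : ℝ := ∑ i, ∑ j, ‖X i j‖

/-- Frobenius norm of a complex matrix. -/
def frob {d : ℕ} (X : Matrix (Fin d) (Fin d) ℂ) : ℝ :=
  Real.sqrt (∑ i, ∑ j, ‖X i j‖ ^ 2)

/-- ℓ1 norm of a complex vector. -/
def vecL1 {d : ℕ} (x : Fin d → ℂ) : ℝ := ∑ j, ‖x j‖

/-- ℓ2 norm of a complex vector. -/
def vecL2 {d : ℕ} (x : Fin d → ℂ) : ℝ := Real.sqrt (∑ j, ‖x j‖ ^ 2)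

/-- Number of nonzero entries of a complex vector. -/
def vecL0 {d : ℕ} (x : Fin d → ℂ) : ℕ := (Finset.univ.filter fun j => x j ≠ 0).card

/-- Y-update of DCA: Y = X/‖X‖_F if X ≠ 0, else 0. -/
def dcaY {d : ℕ} (X : Matrix (Fin d) (Fin d) ℂ) : Matrix (Fin d) (Fin d) ℂ :=
  if X = 0 then 0 else (frob X : ℂ)⁻¹ • X

/-- The convex objective minimized at each DCA iteration. -/
def dcaObj {d m : ℕ} (a : Fin m → Fin d → ℂ) (b : Fin m → ℝ) (lam mu : ℝ)
    (Y Z : Matrix (Fin d) (Fin d) ℂ) : ℝ :=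
  (1/2) * (l2 (fun i => calA a Z i - b i)) ^ 2 + lam * (Z.trace).re
    - lam * ((Yᴴ * Z).trace).re + mu * matL1 Z

/-- A DCA sequence: X⁰ = 0, all iterates Hermitian PSD, and each X^{k+1} globally
    minimizes the convex subproblem over the PSD cone. -/
def IsDCASeq {d m : ℕ} (a : Fin m → Fin d → ℂ) (b : Fin m → ℝ) (lam mu : ℝ)
    (X : ℕ → Matrix (Fin d) (Fin d) ℂ) : Prop :=
  X 0 = 0 ∧ (∀ k, (X k).PosSemidef) ∧
  ∀ k, ∀ Z : Matrix (Fin d) (Fin d) ℂ, Z.PosSemidef →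
    dcaObj a b lam mu (dcaY (X k)) (X (k + 1)) ≤ dcaObj a b lam mu (dcaY (X k)) Z

/-!
Write `G(Z) = λ (Tr Z - ‖Z‖_F) + μ ‖Z‖₁` and `s_k = ‖X^{k+1}‖_F - ⟨X^{k+1}, Y^k⟩ ≥ 0`.
Testing the `k`-th subproblem at the midpoint of `X^k` and `X^{k+1}` shows that
`½‖𝒜X - b‖² + G(X)` drops by at least `λ s_k + ¼ ‖𝒜(X^{k+1} - X^k)‖²` per step, so both terms
tend to `0` and the iterates stay bounded. As `𝒜` need not be injective, this only says that
the direction of `X^{k+1}` approaches `Y^k`; it remains to see that the norms settle down.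
Testing the subproblem along the ray `t X^{k+1}` gives the stationarity identity
`G(X^{k+1}) + λ s_k = ⟨𝒜X^{k+1}, b⟩ - ‖𝒜X^{k+1}‖²`, so `G(X^{k+2}) - G(X^{k+1}) → 0`.
By positive homogeneity this difference is nearly `(‖X^{k+2}‖_F - ‖X^{k+1}‖_F) G(Y^{k+1})`,
and `G(Y^{k+1}) ≥ μ` because `Tr Z ≥ ‖Z‖_F` and `‖Z‖₁ ≥ ‖Z‖_F` for `Z ⪰ 0`.

Only three properties of `H = λ Tr + μ ‖·‖₁` enter: it is sublinear, bounded by a multiple of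
`‖·‖_F`, and at least `(λ + μ) ‖·‖_F` on the PSD cone. So the argument is carried out for such `H`
on a convex cone in a real inner product space, into which matrices embed as vectors of
`ℓ²(Fin d × Fin d)`.
-/

open Filter Topology
open scoped InnerProductSpace

lemma two_mul_add_eq_zero_of_forall_pos_le {α β : ℝ}
    (h : ∀ t, 0 < t → α + β ≤ α * t ^ 2 + β * t) : 2 * α + β = 0 := by
  have hmin : IsLocalMin (fun t : ℝ => α * t ^ 2 + β * t) 1 :=
    Filter.eventually_of_mem (Ioi_mem_nhds one_pos) fun t ht => by simpa using h t ht
  have hderiv : HasDerivAt (fun t : ℝ => α * t ^ 2 + β * t) (α * (2 * 1) + β) 1 := by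
    simpa using ((hasDerivAt_pow 2 (1 : ℝ)).const_mul α).fun_add
      ((hasDerivAt_id (1 : ℝ)).const_mul β)
  simpa [mul_comm] using hmin.hasDerivAt_eq_zero hderiv

lemma tendsto_zero_of_mul_le_sub_succ {f g : ℕ → ℝ} {c : ℝ} (hc : 0 < c) (hg : ∀ n, 0 ≤ g n)
    (hf : BddBelow (Set.range f)) (h : ∀ n, c * g n ≤ f n - f (n + 1)) :
    Tendsto g atTop (𝓝 0) := by
  have hanti : Antitone f :=
    antitone_nat_of_succ_le fun n => by nlinarith [hg n, h n]
  have hlim := tendsto_atTop_ciInf hanti hf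
  refine squeeze_zero hg (fun n => (le_div_iff₀' hc).2 (h n)) ?_
  simpa using (hlim.sub (hlim.comp (tendsto_add_atTop_nat 1))).div_const c

namespace EuclideanSpace

variable {𝕜 ι : Type*} [RCLike 𝕜] [Fintype ι]

lemma norm_le_sum_norm (x : EuclideanSpace 𝕜 ι) : ‖x‖ ≤ ∑ i, ‖x i‖ := by
  rw [EuclideanSpace.norm_eq]
  exact (Real.sqrt_le_sqrt (Finset.sum_sq_le_sq_sum_of_nonneg fun i _ => norm_nonneg _)).trans_eq
    (Real.sqrt_sq (by positivity))

lemma sum_norm_le_sqrt_card_mul_norm (x : EuclideanSpace 𝕜 ι) :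
    ∑ i, ‖x i‖ ≤ √(Fintype.card ι) * ‖x‖ := by
  rw [EuclideanSpace.norm_eq, ← Real.sqrt_mul (Nat.cast_nonneg _)]
  exact Real.le_sqrt_of_sq_le (sq_sum_le_card_mul_sum_sq ..)

end EuclideanSpace

section InnerProductSpace

variable {E F : Type*} [NormedAddCommGroup E] [InnerProductSpace ℝ E]
  [NormedAddCommGroup F] [InnerProductSpace ℝ F]

lemma norm_midpoint_sub_sq (u v b : F) :
    ‖(2 : ℝ)⁻¹ • (u + v) - b‖ ^ 2 = (‖u - b‖ ^ 2 + ‖v - b‖ ^ 2) / 2 - ‖v - u‖ ^ 2 / 4 := by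
  have h := parallelogram_law_with_norm ℝ (u - b) (v - b)
  rw [show u - b - (v - b) = -(v - u) by abel, norm_neg] at h
  rw [show (2 : ℝ)⁻¹ • (u + v) - b = (2 : ℝ)⁻¹ • (u - b + (v - b)) by module, norm_smul,
    Real.norm_of_nonneg (by norm_num)]
  nlinarith

lemma abs_inner_sub_norm_sq_sub_le (u v b : F) :
    |(⟪u, b⟫_ℝ - ‖u‖ ^ 2) - (⟪v, b⟫_ℝ - ‖v‖ ^ 2)| ≤ ‖u - v‖ * (‖b‖ + ‖u‖ + ‖v‖) := by
  have h : (⟪u, b⟫_ℝ - ‖u‖ ^ 2) - (⟪v, b⟫_ℝ - ‖v‖ ^ 2) = ⟪u - v, b - (u + v)⟫_ℝ := by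
    rw [inner_sub_left, inner_sub_right, inner_sub_right, inner_add_right, inner_add_right,
      real_inner_self_eq_norm_sq, real_inner_self_eq_norm_sq, real_inner_comm u v]
    ring
  rw [h]
  refine (abs_real_inner_le_norm _ _).trans (mul_le_mul_of_nonneg_left ?_ (norm_nonneg _))
  calc ‖b - (u + v)‖ ≤ ‖b‖ + ‖u + v‖ := norm_sub_le _ _
    _ ≤ ‖b‖ + (‖u‖ + ‖v‖) := by gcongr; exact norm_add_le _ _
    _ = _ := by ring

namespace DCA

/-- The unit vector `x / ‖x‖`, which is `0` at `x = 0` (as `‖0‖⁻¹ = 0`). -/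
def dir (x : E) : E := ‖x‖⁻¹ • x

lemma norm_dir_le (x : E) : ‖dir x‖ ≤ 1 := by
  rcases eq_or_ne x 0 with rfl | hx
  · simp [dir]
  · rw [dir, norm_smul, norm_inv, norm_norm, inv_mul_cancel₀ (norm_ne_zero_iff.2 hx)]

lemma norm_smul_dir (x : E) : ‖x‖ • dir x = x := by
  rcases eq_or_ne x 0 with rfl | hx
  · simp [dir]
  · rw [dir, smul_smul, mul_inv_cancel₀ (norm_ne_zero_iff.2 hx), one_smul]

lemma inner_self_dir (x : E) : ⟪x, dir x⟫_ℝ = ‖x‖ := by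
  rcases eq_or_ne x 0 with rfl | hx
  · simp [dir]
  · rw [dir, real_inner_smul_right, real_inner_self_eq_norm_sq]
    field_simp

lemma inner_dir_le (x z : E) : ⟪z, dir x⟫_ℝ ≤ ‖z‖ :=
  (real_inner_le_norm _ _).trans (mul_le_of_le_one_right (norm_nonneg _) (norm_dir_le x))

lemma norm_sub_smul_dir_sq_le (x z : E) :
    ‖z - ‖z‖ • dir x‖ ^ 2 ≤ 2 * ‖z‖ * (‖z‖ - ⟪z, dir x⟫_ℝ) := by
  rw [norm_sub_sq_real, real_inner_smul_right, norm_smul, Real.norm_of_nonneg (norm_nonneg _)]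
  have h : ‖dir x‖ ^ 2 ≤ 1 := pow_le_one₀ (norm_nonneg _) (norm_dir_le x)
  nlinarith [mul_le_mul_of_nonneg_left h (sq_nonneg ‖z‖)]

lemma norm_sub_le_norm_sub_smul_dir_add (x z : E) :
    ‖z - x‖ ≤ ‖z - ‖z‖ • dir x‖ + |‖z‖ - ‖x‖| := by
  calc ‖z - x‖ = ‖(z - ‖z‖ • dir x) + (‖z‖ - ‖x‖) • dir x‖ := by
        rw [sub_smul, norm_smul_dir x]; abel_nf
    _ ≤ ‖z - ‖z‖ • dir x‖ + |‖z‖ - ‖x‖| * ‖dir x‖ := by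
        rw [← Real.norm_eq_abs, ← norm_smul]; exact norm_add_le _ _
    _ ≤ ‖z - ‖z‖ • dir x‖ + |‖z‖ - ‖x‖| := by
        gcongr; exact mul_le_of_le_one_right (abs_nonneg _) (norm_dir_le x)

structure IsSublinear (H : E → ℝ) : Prop where
  add_le : ∀ y z, H (y + z) ≤ H y + H z
  smul_eq : ∀ t : ℝ, 0 ≤ t → ∀ z, H (t • z) = t * H z

lemma IsSublinear.abs_sub_le {H : E → ℝ} {L : ℝ} (hH : IsSublinear H) (hL : ∀ z, H z ≤ L * ‖z‖)
    (y z : E) : |H y - H z| ≤ L * ‖y - z‖ := by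
  have h₁ := hH.add_le (y - z) z
  have h₂ := hH.add_le (z - y) y
  rw [sub_add_cancel] at h₁ h₂
  have := hL (y - z)
  have := hL (z - y)
  rw [norm_sub_rev z y] at this
  exact abs_sub_le_iff.2 ⟨by linarith, by linarith⟩

variable (A : E →ₗ[ℝ] F) (b : F) (H : E → ℝ) (lam : ℝ)

/-- With `H = λ Tr + μ ‖·‖₁` this is the paper's `λ (Tr Z - ‖Z‖_F) + μ ‖Z‖₁`. -/
def regularizer (z : E) : ℝ := H z - lam * ‖z‖

def energy (z : E) : ℝ := ‖A z - b‖ ^ 2 / 2 + regularizer H lam z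

def subproblem (x z : E) : ℝ := ‖A z - b‖ ^ 2 / 2 + H z - lam * ⟪z, dir x⟫_ℝ

def normGap (x z : E) : ℝ := ‖z‖ - ⟪z, dir x⟫_ℝ

structure IsDCASequence (K : ConvexCone ℝ E) (x : ℕ → E) : Prop where
  mem : ∀ k, x k ∈ K
  isMinOn : ∀ k, IsMinOn (subproblem A b H lam (x k)) K (x (k + 1))

variable {A b H lam}

lemma normGap_nonneg (x z : E) : 0 ≤ normGap x z := sub_nonneg.2 (inner_dir_le x z)

lemma normGap_self (x : E) : normGap x x = 0 := by rw [normGap, inner_self_dir, sub_self]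

lemma subproblem_eq (x z : E) :
    subproblem A b H lam x z = energy A b H lam z + lam * normGap x z := by
  rw [subproblem, energy, regularizer, normGap]; ring

lemma regularizer_smul (hH : IsSublinear H) {t : ℝ} (ht : 0 ≤ t) (z : E) :
    regularizer H lam (t • z) = t * regularizer H lam z := by
  rw [regularizer, regularizer, hH.smul_eq t ht, norm_smul, Real.norm_of_nonneg ht]; ring

lemma abs_regularizer_sub_le {L : ℝ} (hH : IsSublinear H) (hL : ∀ z, H z ≤ L * ‖z‖)
    (hlam : 0 ≤ lam) (y z : E) :
    |regularizer H lam y - regularizer H lam z| ≤ (L + lam) * ‖y - z‖ := by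
  have h₁ := hH.abs_sub_le hL y z
  have h₂ : |lam * ‖y‖ - lam * ‖z‖| ≤ lam * ‖y - z‖ := by
    rw [← mul_sub, abs_mul, abs_of_nonneg hlam]
    exact mul_le_mul_of_nonneg_left (abs_norm_sub_norm_le y z) hlam
  calc |regularizer H lam y - regularizer H lam z|
      = |(H y - H z) - (lam * ‖y‖ - lam * ‖z‖)| := by rw [regularizer, regularizer]; ring_nf
    _ ≤ |H y - H z| + |lam * ‖y‖ - lam * ‖z‖| := abs_sub _ _
    _ ≤ (L + lam) * ‖y - z‖ := by linarith

variable {K : ConvexCone ℝ E} {mu : ℝ}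

lemma mul_norm_le_regularizer (hK : ∀ z ∈ K, (lam + mu) * ‖z‖ ≤ H z) {z : E} (hz : z ∈ K) :
    mu * ‖z‖ ≤ regularizer H lam z := by
  have := hK z hz
  rw [regularizer]; linarith

/-- For `y ≠ 0`, homogeneity of the regularizer `G` gives
`G (‖z‖ • dir y) - G y = (‖z‖ - ‖y‖) G (dir y)`, and `G (dir y) ≥ μ`. -/
lemma mul_abs_norm_sub_norm_le (hH : IsSublinear H) (hK : ∀ z ∈ K, (lam + mu) * ‖z‖ ≤ H z)
    (hmu : 0 ≤ mu) {y : E} (hy : y ∈ K) (z : E) :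
    mu * |‖z‖ - ‖y‖| ≤ |regularizer H lam z - regularizer H lam (‖z‖ • dir y)|
      + |regularizer H lam z - regularizer H lam y| + mu * normGap y z := by
  rcases eq_or_ne y 0 with rfl | hy0
  · have : normGap 0 z = ‖z‖ := by simp [normGap, dir]
    rw [this, norm_zero, sub_zero, abs_norm]
    linarith [abs_nonneg (regularizer H lam z - regularizer H lam (‖z‖ • dir 0)),
      abs_nonneg (regularizer H lam z - regularizer H lam 0)]
  have hd : dir y ∈ K := K.smul_mem (inv_pos.2 (norm_pos_iff.2 hy0)) hy
  have hd_norm : ‖dir y‖ = 1 := by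
    rw [dir, norm_smul, norm_inv, norm_norm, inv_mul_cancel₀ (norm_ne_zero_iff.2 hy0)]
  have hreg : mu ≤ regularizer H lam (dir y) := by
    simpa [hd_norm] using mul_norm_le_regularizer hK hd
  have hy_eq : regularizer H lam y = ‖y‖ * regularizer H lam (dir y) := by
    conv_lhs => rw [← norm_smul_dir y]
    exact regularizer_smul hH (norm_nonneg y) _
  calc mu * |‖z‖ - ‖y‖| ≤ |‖z‖ - ‖y‖| * regularizer H lam (dir y) := by
        rw [mul_comm]; exact mul_le_mul_of_nonneg_left hreg (abs_nonneg _)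
    _ = |regularizer H lam (‖z‖ • dir y) - regularizer H lam y| := by
        rw [regularizer_smul hH (norm_nonneg z), hy_eq, ← sub_mul, abs_mul,
          abs_of_nonneg (hmu.trans hreg)]
    _ ≤ |regularizer H lam z - regularizer H lam (‖z‖ • dir y)|
          + |regularizer H lam z - regularizer H lam y| := by
        rw [abs_sub_comm (regularizer H lam z)]; exact abs_sub_le _ _ _
    _ ≤ _ := le_add_of_nonneg_right (mul_nonneg hmu (normGap_nonneg y z))

lemma subproblem_smul (hH : IsSublinear H) (x z : E) {t : ℝ} (ht : 0 ≤ t) :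
    subproblem A b H lam x (t • z) = ‖A z‖ ^ 2 / 2 * t ^ 2
      + (H z - lam * ⟪z, dir x⟫_ℝ - ⟪A z, b⟫_ℝ) * t + ‖b‖ ^ 2 / 2 := by
  rw [subproblem, map_smul, norm_sub_sq_real, norm_smul, Real.norm_of_nonneg ht,
    real_inner_smul_left, real_inner_smul_left, hH.smul_eq t ht]
  ring

lemma mul_norm_add_le_energy (hK : ∀ z ∈ K, (lam + mu) * ‖z‖ ≤ H z) {z : E} (hz : z ∈ K) :
    mu * ‖z‖ + ‖A z - b‖ ^ 2 / 2 ≤ energy A b H lam z := by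
  rw [energy]; linarith [mul_norm_le_regularizer hK hz]

namespace IsDCASequence

variable {x : ℕ → E}

lemma energy_succ_add_le (hx : IsDCASequence A b H lam K x) (hH : IsSublinear H) (k : ℕ) :
    energy A b H lam (x (k + 1)) + lam * normGap (x k) (x (k + 1))
      + ‖A (x (k + 1) - x k)‖ ^ 2 / 4 ≤ energy A b H lam (x k) := by
  set m := (2 : ℝ)⁻¹ • (x k + x (k + 1))
  have hm : m ∈ K := K.smul_mem (by norm_num) (K.add_mem (hx.mem k) (hx.mem (k + 1)))
  have hmin := isMinOn_iff.1 (hx.isMinOn k) m hm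
  have hHm : H m ≤ (H (x k) + H (x (k + 1))) / 2 := by
    rw [hH.smul_eq _ (by norm_num)]
    linarith [hH.add_le (x k) (x (k + 1))]
  have hAm : ‖A m - b‖ ^ 2 = (‖A (x k) - b‖ ^ 2 + ‖A (x (k + 1)) - b‖ ^ 2) / 2
      - ‖A (x (k + 1) - x k)‖ ^ 2 / 4 := by
    rw [map_smul, map_add, map_sub, norm_midpoint_sub_sq]
  have hinner : ⟪m, dir (x k)⟫_ℝ = (⟪x k, dir (x k)⟫_ℝ + ⟪x (k + 1), dir (x k)⟫_ℝ) / 2 := by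
    rw [real_inner_smul_left, inner_add_left]; ring
  have hk : subproblem A b H lam (x k) (x k) = energy A b H lam (x k) := by
    rw [subproblem_eq, normGap_self, mul_zero, add_zero]
  have hk1 := subproblem_eq (A := A) (b := b) (H := H) (lam := lam) (x k) (x (k + 1))
  simp only [subproblem] at hmin hk hk1
  rw [hAm, hinner] at hmin
  linarith

lemma stationary (hx : IsDCASequence A b H lam K x) (hH : IsSublinear H) (k : ℕ) :
    regularizer H lam (x (k + 1)) + lam * normGap (x k) (x (k + 1))
      = ⟪A (x (k + 1)), b⟫_ℝ - ‖A (x (k + 1))‖ ^ 2 := by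
  -- `t = 1` minimizes the quadratic `t ↦ subproblem (x k) (t • x (k + 1))` over `t > 0`
  have h := two_mul_add_eq_zero_of_forall_pos_le (α := ‖A (x (k + 1))‖ ^ 2 / 2)
    (β := H (x (k + 1)) - lam * ⟪x (k + 1), dir (x k)⟫_ℝ - ⟪A (x (k + 1)), b⟫_ℝ) fun t ht => by
    have hmin := isMinOn_iff.1 (hx.isMinOn k) _ (K.smul_mem ht (hx.mem (k + 1)))
    rw [subproblem_smul hH _ _ ht.le] at hmin
    have h1 := subproblem_smul (A := A) (b := b) (lam := lam) hH (x k) (x (k + 1)) zero_le_one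
    rw [one_smul] at h1
    rw [h1] at hmin
    linarith
  rw [regularizer, normGap]
  linarith

lemma energy_antitone (hx : IsDCASequence A b H lam K x) (hH : IsSublinear H) (hlam : 0 ≤ lam) :
    Antitone fun k => energy A b H lam (x k) :=
  antitone_nat_of_succ_le fun k => by
    nlinarith [hx.energy_succ_add_le hH k, normGap_nonneg (x k) (x (k + 1)),
      sq_nonneg ‖A (x (k + 1) - x k)‖]

lemma bddBelow_energy (hx : IsDCASequence A b H lam K x) (hK : ∀ z ∈ K, (lam + mu) * ‖z‖ ≤ H z)
    (hmu : 0 ≤ mu) : BddBelow (Set.range fun k => energy A b H lam (x k)) := by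
  refine ⟨0, ?_⟩
  rintro _ ⟨k, rfl⟩
  have := mul_norm_add_le_energy (A := A) (b := b) hK (hx.mem k)
  have := mul_nonneg hmu (norm_nonneg (x k))
  have := sq_nonneg ‖A (x k) - b‖
  linarith

lemma exists_bound (hx : IsDCASequence A b H lam K x) (hH : IsSublinear H)
    (hK : ∀ z ∈ K, (lam + mu) * ‖z‖ ≤ H z) (hlam : 0 ≤ lam) (hmu : 0 < mu) :
    ∃ R, ∀ k, ‖x k‖ ≤ R ∧ ‖A (x k)‖ ≤ R := by
  set e₀ := energy A b H lam (x 0)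
  have key k : mu * ‖x k‖ ≤ e₀ ∧ ‖A (x k) - b‖ ^ 2 ≤ 2 * e₀ := by
    have hle : energy A b H lam (x k) ≤ e₀ := hx.energy_antitone hH hlam (Nat.zero_le k)
    have hbd := mul_norm_add_le_energy (A := A) (b := b) hK (hx.mem k)
    have := mul_nonneg hmu.le (norm_nonneg (x k))
    have := sq_nonneg ‖A (x k) - b‖
    constructor <;> linarith
  refine ⟨max (e₀ / mu) (‖b‖ + √(2 * e₀)), fun k => ⟨le_max_of_le_left ?_, le_max_of_le_right ?_⟩⟩
  · rw [le_div_iff₀' hmu]; exact (key k).1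
  · have : ‖A (x k) - b‖ ≤ √(2 * e₀) := Real.le_sqrt_of_sq_le (key k).2
    linarith [norm_le_norm_add_norm_sub' (A (x k)) b]

lemma tendsto_normGap (hx : IsDCASequence A b H lam K x) (hH : IsSublinear H)
    (hK : ∀ z ∈ K, (lam + mu) * ‖z‖ ≤ H z) (hlam : 0 < lam) (hmu : 0 ≤ mu) :
    Tendsto (fun k => normGap (x k) (x (k + 1))) atTop (𝓝 0) :=
  tendsto_zero_of_mul_le_sub_succ hlam (fun k => normGap_nonneg _ _) (hx.bddBelow_energy hK hmu)
    fun k => by linarith [hx.energy_succ_add_le hH k, sq_nonneg ‖A (x (k + 1) - x k)‖]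

lemma tendsto_norm_map_sub (hx : IsDCASequence A b H lam K x) (hH : IsSublinear H)
    (hK : ∀ z ∈ K, (lam + mu) * ‖z‖ ≤ H z) (hlam : 0 ≤ lam) (hmu : 0 ≤ mu) :
    Tendsto (fun k => ‖A (x (k + 1) - x k)‖) atTop (𝓝 0) := by
  have hsq : Tendsto (fun k => ‖A (x (k + 1) - x k)‖ ^ 2) atTop (𝓝 0) :=
    tendsto_zero_of_mul_le_sub_succ (c := 4⁻¹) (by norm_num) (fun k => sq_nonneg _)
      (hx.bddBelow_energy hK hmu) fun k => by
        nlinarith [hx.energy_succ_add_le hH k, normGap_nonneg (x k) (x (k + 1))]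
  simpa using hsq.sqrt

lemma abs_regularizer_succ_sub_le (hx : IsDCASequence A b H lam K x) (hH : IsSublinear H)
    (hlam : 0 ≤ lam) (k : ℕ) :
    |regularizer H lam (x (k + 2)) - regularizer H lam (x (k + 1))|
      ≤ ‖A (x (k + 2) - x (k + 1))‖ * (‖b‖ + ‖A (x (k + 2))‖ + ‖A (x (k + 1))‖)
        + lam * (normGap (x (k + 1)) (x (k + 2)) + normGap (x k) (x (k + 1))) := by
  have h := abs_inner_sub_norm_sq_sub_le (A (x (k + 2))) (A (x (k + 1))) b
  rw [← hx.stationary hH (k + 1), ← hx.stationary hH k, ← map_sub] at h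
  have h₁ := normGap_nonneg (x (k + 1)) (x (k + 2))
  have h₂ := normGap_nonneg (x k) (x (k + 1))
  rw [abs_le] at h ⊢
  constructor <;> nlinarith

theorem tendsto_norm_sub {L : ℝ} (hx : IsDCASequence A b H lam K x) (hH : IsSublinear H)
    (hL : ∀ z, H z ≤ L * ‖z‖) (hK : ∀ z ∈ K, (lam + mu) * ‖z‖ ≤ H z) (hlam : 0 < lam)
    (hmu : 0 < mu) : Tendsto (fun k => ‖x (k + 1) - x k‖) atTop (𝓝 0) := by
  obtain ⟨R, hR⟩ := hx.exists_bound hH hK hlam.le hmu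
  have hs := hx.tendsto_normGap hH hK hlam hmu.le
  have hs₁ := hs.comp (tendsto_add_atTop_nat 1)
  have hAx := (hx.tendsto_norm_map_sub hH hK hlam.le hmu.le).comp (tendsto_add_atTop_nat 1)
  have hdir : Tendsto (fun k => ‖x (k + 2) - ‖x (k + 2)‖ • dir (x (k + 1))‖) atTop (𝓝 0) := by
    refine squeeze_zero (fun _ => norm_nonneg _) (fun k => Real.le_sqrt_of_sq_le ?_)
      (by simpa using (hs₁.const_mul (2 * R)).sqrt)
    refine (norm_sub_smul_dir_sq_le _ _).trans ?_
    have := normGap_nonneg (x (k + 1)) (x (k + 2))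
    have := (hR (k + 2)).1
    simp only [normGap] at *
    nlinarith
  have hreg : Tendsto (fun k => regularizer H lam (x (k + 2)) - regularizer H lam (x (k + 1)))
      atTop (𝓝 0) := by
    refine squeeze_zero_norm (fun k => (hx.abs_regularizer_succ_sub_le hH hlam.le k).trans ?_)
      (by simpa using (hAx.mul_const (‖b‖ + R + R)).add ((hs₁.add hs).const_mul lam))
    have := (hR (k + 2)).2
    have := (hR (k + 1)).2
    gcongr
    rw [map_sub]
  have hnorm : Tendsto (fun k => ‖x (k + 2)‖ - ‖x (k + 1)‖) atTop (𝓝 0) := by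
    refine squeeze_zero_norm (fun k => ?_)
      (by simpa using
        (((hdir.const_mul (L + lam)).add hreg.abs).add (hs₁.const_mul mu)).div_const mu)
    rw [Real.norm_eq_abs, le_div_iff₀' hmu]
    refine (mul_abs_norm_sub_norm_le hH hK hmu.le (hx.mem (k + 1)) _).trans ?_
    gcongr
    exact abs_regularizer_sub_le hH hL hlam.le _ _
  rw [← tendsto_add_atTop_iff_nat 1]
  exact squeeze_zero (fun _ => norm_nonneg _) (fun k => norm_sub_le_norm_sub_smul_dir_add _ _)
    (by simpa using hdir.add hnorm.abs)

end IsDCASequence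

end DCA

end InnerProductSpace

section MatrixDCA

open DCA

variable {d m : ℕ}

/-- Matrices as vectors of `ℓ²(Fin d × Fin d)`, on which `frob` is the Euclidean norm. -/
def flattenL2 : Matrix (Fin d) (Fin d) ℂ ≃ₗ[ℂ] EuclideanSpace ℂ (Fin d × Fin d) :=
  (LinearEquiv.curry ℂ ℂ (Fin d) (Fin d)).symm.trans (WithLp.linearEquiv 2 ℂ _).symm

@[simp] lemma flattenL2_apply (X : Matrix (Fin d) (Fin d) ℂ) (p : Fin d × Fin d) :
    flattenL2 X p = X p.1 p.2 := rfl

@[simp] lemma flattenL2_symm_apply (x : EuclideanSpace ℂ (Fin d × Fin d)) (i j : Fin d) :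
    flattenL2.symm x i j = x (i, j) := rfl

lemma flattenL2_ofReal_smul (t : ℝ) (X : Matrix (Fin d) (Fin d) ℂ) :
    flattenL2 ((t : ℂ) • X) = t • flattenL2 X := rfl

lemma frob_eq_norm_flattenL2 (X : Matrix (Fin d) (Fin d) ℂ) : frob X = ‖flattenL2 X‖ := by
  rw [frob, EuclideanSpace.norm_eq, Fintype.sum_prod_type]; rfl

lemma matL1_eq_sum_norm (X : Matrix (Fin d) (Fin d) ℂ) : matL1 X = ∑ p, ‖flattenL2 X p‖ := by
  rw [matL1, Fintype.sum_prod_type]; rfl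

lemma re_trace_conjTranspose_mul (Y Z : Matrix (Fin d) (Fin d) ℂ) :
    ((Yᴴ * Z).trace).re = ⟪flattenL2 Z, flattenL2 Y⟫_ℝ := by
  rw [PiLp.inner_apply, Fintype.sum_prod_type, Matrix.trace, Finset.sum_comm]
  simp [Matrix.mul_apply, Complex.re_sum]

lemma flattenL2_dcaY (X : Matrix (Fin d) (Fin d) ℂ) : flattenL2 (dcaY X) = dir (flattenL2 X) := by
  rw [dcaY, dir, ← frob_eq_norm_flattenL2]
  split_ifs with h
  · simp [h]
  · rw [← Complex.ofReal_inv, flattenL2_ofReal_smul]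

open scoped Matrix.Norms.Frobenius in
lemma norm_flattenL2 (X : Matrix (Fin d) (Fin d) ℂ) : ‖flattenL2 X‖ = ‖X‖ := by
  rw [Matrix.frobenius_norm_def, EuclideanSpace.norm_eq, Real.sqrt_eq_rpow, Fintype.sum_prod_type]
  simp

open scoped MatrixOrder Matrix.Norms.Frobenius in
lemma norm_flattenL2_le_re_trace {X : Matrix (Fin d) (Fin d) ℂ} (hX : X.PosSemidef) :
    ‖flattenL2 X‖ ≤ X.trace.re := by
  obtain ⟨B, rfl⟩ := CStarAlgebra.nonneg_iff_eq_star_mul_self.mp hX.nonneg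
  rw [Matrix.star_eq_conjTranspose, re_trace_conjTranspose_mul, real_inner_self_eq_norm_sq,
    norm_flattenL2, norm_flattenL2, sq]
  nth_rw 1 [← Matrix.frobenius_norm_conjTranspose B]
  exact Matrix.frobenius_norm_mul Bᴴ B

def measurementMap (a : Fin m → Fin d → ℂ) :
    EuclideanSpace ℂ (Fin d × Fin d) →ₗ[ℝ] EuclideanSpace ℝ (Fin m) where
  toFun x := WithLp.toLp 2 (calA a (flattenL2.symm x))
  map_add' x y := by
    ext i
    simp [calA, Matrix.add_mulVec, dotProduct_add]
  map_smul' t x := by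
    ext i
    simp only [calA, RingHom.id_apply, PiLp.smul_apply, smul_eq_mul]
    rw [show flattenL2.symm (t • x) = (t : ℂ) • flattenL2.symm x from rfl, Matrix.smul_mulVec,
      dotProduct_smul, smul_eq_mul, Complex.re_ofReal_mul]

lemma l2_calA_sub_eq_norm (a : Fin m → Fin d → ℂ) (b : Fin m → ℝ) (Z : Matrix (Fin d) (Fin d) ℂ) :
    l2 (fun i => calA a Z i - b i) = ‖measurementMap a (flattenL2 Z) - WithLp.toLp 2 b‖ := by
  rw [l2, EuclideanSpace.norm_eq]
  simp [measurementMap]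

def traceL1 (lam mu : ℝ) (x : EuclideanSpace ℂ (Fin d × Fin d)) : ℝ :=
  lam * ∑ i, (x (i, i)).re + mu * ∑ p, ‖x p‖

lemma traceL1_flattenL2 (lam mu : ℝ) (X : Matrix (Fin d) (Fin d) ℂ) :
    traceL1 lam mu (flattenL2 X) = lam * X.trace.re + mu * matL1 X := by
  rw [traceL1, matL1_eq_sum_norm, Matrix.trace, Complex.re_sum]; rfl

lemma isSublinear_traceL1 (lam mu : ℝ) (hmu : 0 ≤ mu) : IsSublinear (traceL1 (d := d) lam mu) where
  add_le y z := by
    have : ∑ p, ‖y p + z p‖ ≤ ∑ p, ‖y p‖ + ∑ p, ‖z p‖ := by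
      rw [← Finset.sum_add_distrib]; exact Finset.sum_le_sum fun p _ => norm_add_le _ _
    simp only [traceL1, PiLp.add_apply, Complex.add_re, Finset.sum_add_distrib]
    linarith [mul_le_mul_of_nonneg_left this hmu]
  smul_eq t ht z := by
    simp only [traceL1, PiLp.smul_apply, Complex.real_smul, Complex.re_ofReal_mul, norm_mul,
      Complex.norm_of_nonneg ht, ← Finset.mul_sum]
    ring

def psdCone : ConvexCone ℝ (EuclideanSpace ℂ (Fin d × Fin d)) where
  carrier := {x | (flattenL2.symm x).PosSemidef}
  smul_mem' c hc x hx := Matrix.PosSemidef.smul hx hc.le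
  add_mem' x hx y hy := by simpa using hx.add hy

lemma mem_psdCone {x : EuclideanSpace ℂ (Fin d × Fin d)} :
    x ∈ psdCone ↔ (flattenL2.symm x).PosSemidef := Iff.rfl

lemma sum_re_diag_le_sum_norm (x : EuclideanSpace ℂ (Fin d × Fin d)) :
    ∑ i, (x (i, i)).re ≤ ∑ p, ‖x p‖ := by
  rw [Fintype.sum_prod_type]
  exact Finset.sum_le_sum fun i _ => (Complex.re_le_norm _).trans
    (Finset.single_le_sum (f := fun j => ‖x (i, j)‖) (fun j _ => norm_nonneg _) (Finset.mem_univ i))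

lemma traceL1_le {lam mu : ℝ} (hlam : 0 ≤ lam) (hmu : 0 ≤ mu)
    (x : EuclideanSpace ℂ (Fin d × Fin d)) :
    traceL1 lam mu x ≤ (lam + mu) * √(Fintype.card (Fin d × Fin d)) * ‖x‖ := by
  have h := EuclideanSpace.sum_norm_le_sqrt_card_mul_norm x
  have := mul_le_mul_of_nonneg_left (sum_re_diag_le_sum_norm x) hlam
  rw [traceL1]
  nlinarith

lemma le_traceL1 {lam mu : ℝ} (hlam : 0 ≤ lam) (hmu : 0 ≤ mu)
    {x : EuclideanSpace ℂ (Fin d × Fin d)} (hx : x ∈ psdCone) :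
    (lam + mu) * ‖x‖ ≤ traceL1 lam mu x := by
  have h₁ := norm_flattenL2_le_re_trace hx
  simp only [LinearEquiv.apply_symm_apply, Matrix.trace, Complex.re_sum, Matrix.diag_apply,
    flattenL2_symm_apply] at h₁
  have h₂ := EuclideanSpace.norm_le_sum_norm x
  rw [traceL1]
  nlinarith

lemma dcaObj_eq_subproblem (a : Fin m → Fin d → ℂ) (b : Fin m → ℝ) (lam mu : ℝ)
    (X Z : Matrix (Fin d) (Fin d) ℂ) :
    dcaObj a b lam mu (dcaY X) Z = subproblem (measurementMap a) (WithLp.toLp 2 b) (traceL1 lam mu)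
      lam (flattenL2 X) (flattenL2 Z) := by
  rw [dcaObj, subproblem, l2_calA_sub_eq_norm, re_trace_conjTranspose_mul, flattenL2_dcaY,
    traceL1_flattenL2]
  ring

lemma IsDCASeq.isDCASequence {a : Fin m → Fin d → ℂ} {b : Fin m → ℝ} {lam mu : ℝ}
    {X : ℕ → Matrix (Fin d) (Fin d) ℂ} (hX : IsDCASeq a b lam mu X) :
    IsDCASequence (measurementMap a) (WithLp.toLp 2 b) (traceL1 lam mu) lam psdCone
      (fun k => flattenL2 (X k)) where
  mem k := mem_psdCone.2 (by simpa using hX.2.1 k)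
  isMinOn k := isMinOn_iff.2 fun z hz => by
    rw [← flattenL2.apply_symm_apply z, ← dcaObj_eq_subproblem, ← dcaObj_eq_subproblem]
    exact hX.2.2 k _ hz

end MatrixDCA

/-- Successive DCA iterates converge to each other: ‖X^{k+1} − X^k‖_F → 0. -/
theorem dca_successive_differences_vanish {d m : ℕ} (a : Fin m → Fin d → ℂ)
    (b : Fin m → ℝ) (lam mu : ℝ) (hlam : 0 < lam) (hmu : 0 < mu)
    (X : ℕ → Matrix (Fin d) (Fin d) ℂ) (hX : IsDCASeq a b lam mu X) :
    Filter.Tendsto (fun k => frob (X (k + 1) - X k)) Filter.atTop (nhds 0) := by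
  have h := hX.isDCASequence.tendsto_norm_sub (isSublinear_traceL1 lam mu hmu.le)
    (traceL1_le hlam.le hmu.le) (fun _ hz => le_traceL1 hlam.le hmu.le hz) hlam hmu
  simpa [frob_eq_norm_flattenL2] using h
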